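/- arXiv:1405.4154 — 3 statements merged into one kernel-verified Lean document; each statement's English description precedes it below -/
import Mathlib

section
/- With χ and α as above, the derivative of α satisfies α'(x) = 1 - 2π·∑_{k∈ℤ} χ(x - 2πk) for all x ∈ ℝ. -/
open Real MeasureTheory

/-- The sawtooth function `z mod 2π ∈ [0,2π)`. -/
noncomputable def saw (z : ℝ) : ℝ := z - 2 * π * ⌊z / (2 * π)⌋

theorem smeared_sawtooth_derivative (ε : ℝ) (hε : 0 < ε) (hε' : ε < π / 2)
    (χ : ℝ → ℝ) (hχ : ContDiff ℝ (⊤ : ℕ∞) χ)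
    (hsupp : Function.support χ ⊆ Set.Icc (-ε) ε)
    (heven : ∀ x, χ (-x) = χ x)
    (hint : ∫ x, χ x = 1)
    (α : ℝ → ℝ) (hα : ∀ x, α x = ∫ y, saw (x - y) * χ y) :
    ∀ x : ℝ, deriv α x = 1 - 2 * π * ∑' k : ℤ, χ (x - 2 * π * k) := by
  have hπ : (0:ℝ) < π := Real.pi_pos
  have hχc : Continuous χ := hχ.continuous
  have hcs : HasCompactSupport χ :=
    HasCompactSupport.intro isCompact_Icc (fun y hy => by
      by_contra h; exact hy (hsupp h))
  have hχint : Integrable χ := hχc.integrable_of_hasCompactSupport hcs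
  have hεπ : ε < π := hε'.trans (by linarith)
  have hyχint : Integrable (fun y => y * χ y) := by
    have : HasCompactSupport (fun y => y * χ y) := hcs.mul_left
    exact (continuous_id.mul hχc).integrable_of_hasCompactSupport this
  have hodd : ∫ y, y * χ y = 0 := by
    have h1 : ∫ y, -y * χ (-y) = ∫ y, y * χ y :=
      integral_neg_eq_self (fun y => y * χ y) volume
    have h2 : ∫ y, -y * χ (-y) = - ∫ y, y * χ y := by
      simp only [heven, neg_mul]
      exact integral_neg _
    linarith [h2 ▸ h1]
  intro x
  set k₀ : ℤ := round (x / (2 * π)) with hk₀def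
  have hk₀ : |x - 2 * π * k₀| ≤ π := by
    have h := abs_sub_round (x / (2 * π))
    have h2 : x - 2 * π * k₀ = 2 * π * (x / (2 * π) - k₀) := by field_simp
    rw [h2, abs_mul, abs_of_pos (by linarith : (0:ℝ) < 2 * π)]
    nlinarith [abs_nonneg (x / (2*π) - (k₀:ℝ))]
  set a : ℝ := x - 2 * π * k₀ with hadef
  set G : ℝ → ℝ := fun t => ∫ y in Set.Iic t, χ y with hGdef
  set F : ℝ → ℝ := fun x' => x' - 2 * π * k₀ + 2 * π - 2 * π * G (x' - 2 * π * k₀) with hFdef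
  -- local formula
  have hloc : ∀ x' ∈ Set.Ioo (x - π/4) (x + π/4), α x' = F x' := by
    intro x' hx'
    have hb : |x' - x| < π/4 := by
      rw [abs_sub_lt_iff]; constructor
      · linarith [hx'.2]
      · linarith [hx'.1]
    have hpt : ∀ y, saw (x' - y) * χ y =
        (x' - y - 2 * π * k₀ + 2 * π) * χ y
          - 2 * π * (Set.Iic (x' - 2 * π * k₀)).indicator χ y := by
      intro y
      by_cases hy : χ y = 0
      · simp [hy, Set.indicator_apply_eq_zero.2 (fun _ => hy)]
      · have hymem : y ∈ Set.Icc (-ε) ε := hsupp hy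
        have hyabs : |y| ≤ ε := abs_le.2 ⟨hymem.1, hymem.2⟩
        have hzb : |x' - y - 2 * π * k₀| < 2 * π := by
          have he : x' - y - 2*π*k₀ = a + (x' - x) + (-y) := by rw [hadef]; ring
          calc |x' - y - 2*π*k₀| = |a + (x' - x) + (-y)| := by rw [he]
            _ ≤ |a + (x' - x)| + |(-y)| := abs_add_le _ _
            _ ≤ |a| + |x' - x| + |y| := by rw [abs_neg]; linarith [abs_add_le a (x' - x)]
            _ < 2 * π := by linarith
        have hfl : (⌊(x' - y) / (2 * π)⌋ : ℤ)
            = k₀ + ⌊(x' - y - 2 * π * k₀) / (2 * π)⌋ := by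
          have he : (x' - y) / (2 * π) = (x' - y - 2 * π * k₀) / (2 * π) + (k₀ : ℝ) := by
            field_simp; ring
          rw [he, Int.floor_add_intCast]; ring
        have hzb1 := abs_lt.1 hzb
        by_cases hzpos : 0 ≤ x' - y - 2 * π * k₀
        · have hfl0 : ⌊(x' - y - 2 * π * k₀) / (2 * π)⌋ = 0 := by
            rw [Int.floor_eq_zero_iff]
            constructor
            · positivity
            · rw [div_lt_one (by linarith)]; linarith [hzb1.2]
          have hind : (Set.Iic (x' - 2 * π * k₀)).indicator χ y = χ y := by
            rw [Set.indicator_of_mem]; exact Set.mem_Iic.2 (by linarith)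
          rw [saw, hfl, hfl0, hind]; push_cast; ring
        · push_neg at hzpos
          have hfl0 : ⌊(x' - y - 2 * π * k₀) / (2 * π)⌋ = -1 := by
            have h2π : (0:ℝ) < 2 * π := by linarith
            rw [Int.floor_eq_iff]
            push_cast
            constructor
            · rw [le_div_iff₀ h2π]; linarith [hzb1.1]
            · have : (x' - y - 2 * π * k₀) / (2 * π) < 0 :=
                div_neg_of_neg_of_pos hzpos h2π
              linarith
          have hind : (Set.Iic (x' - 2 * π * k₀)).indicator χ y = 0 := by
            rw [Set.indicator_of_notMem]; exact fun h => by simp at h; linarith [h]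
          rw [saw, hfl, hfl0, hind]; push_cast; ring
    -- integral computation
    have hf1 : Integrable (fun y => (x' - y - 2 * π * k₀ + 2 * π) * χ y) := by
      have hc : HasCompactSupport (fun y => (x' - y - 2 * π * k₀ + 2 * π) * χ y) := hcs.mul_left
      exact (Continuous.mul (by continuity) hχc).integrable_of_hasCompactSupport hc
    have hf2 : Integrable (fun y => 2 * π * (Set.Iic (x' - 2 * π * k₀)).indicator χ y) :=
      (hχint.indicator measurableSet_Iic).const_mul _
    have split : (fun y => (x' - y - 2 * π * k₀ + 2 * π) * χ y)
        = fun y => (x' - 2 * π * k₀ + 2 * π) * χ y - y * χ y := by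
      funext y; ring
    rw [hα, show (fun y => saw (x' - y) * χ y) = fun y =>
        (x' - y - 2 * π * k₀ + 2 * π) * χ y
          - 2 * π * (Set.Iic (x' - 2 * π * k₀)).indicator χ y from funext hpt,
      integral_sub hf1 hf2]
    rw [split] at hf1 ⊢
    rw [integral_sub ((hχint.const_mul _)) hyχint, integral_const_mul, hint, hodd,
      integral_const_mul, integral_indicator measurableSet_Iic]
    rw [hFdef]; ring
  -- FTC for G
  have hgi : HasDerivAt (fun t => ∫ u in (a-1)..t, χ u) (χ a) a :=
    intervalIntegral.integral_hasDerivAt_right hχint.intervalIntegrable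
      (hχc.stronglyMeasurableAtFilter _ _) hχc.continuousAt
  have hGeq : G = fun t => G (a-1) + ∫ u in (a-1)..t, χ u := by
    funext t
    rw [hGdef]
    have key : (∫ u in Set.Iic t, χ u) - ∫ u in Set.Iic (a-1), χ u = ∫ u in (a-1)..t, χ u :=
      intervalIntegral.integral_Iic_sub_Iic hχint.integrableOn hχint.integrableOn
    linarith [key]
  have hG : HasDerivAt G (χ a) a := by
    rw [hGeq]; exact (hgi.const_add _)
  have h2 : HasDerivAt (fun x' => G (x' - 2 * π * k₀)) (χ a) x := by
    have hin : HasDerivAt (fun x' : ℝ => x' - 2 * π * k₀) 1 x := (hasDerivAt_id x).sub_const _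
    have := hG.comp x hin
    simpa [Function.comp_def] using this
  have h1 : HasDerivAt (fun x' : ℝ => x' - 2 * π * k₀ + 2 * π) 1 x :=
    ((hasDerivAt_id x).sub_const _).add_const _
  have hF : HasDerivAt F (1 - 2 * π * χ a) x := h1.sub (h2.const_mul (2 * π))
  have hev : α =ᶠ[nhds x] F :=
    Filter.eventuallyEq_of_mem (Ioo_mem_nhds (by linarith) (by linarith)) hloc
  have hderiv : deriv α x = 1 - 2 * π * χ a := by
    rw [hev.deriv_eq]; exact hF.deriv
  have hts : ∑' k : ℤ, χ (x - 2 * π * k) = χ a := by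
    rw [hadef]
    refine tsum_eq_single k₀ (fun k hk => ?_)
    by_contra h
    have hm : x - 2 * π * k ∈ Set.Icc (-ε) ε := hsupp h
    have habs : |x - 2 * π * k| ≤ ε := abs_le.2 ⟨hm.1, hm.2⟩
    have h1 : (1:ℝ) ≤ |((k:ℝ) - k₀)| := by
      have : (1:ℤ) ≤ |k - k₀| := Int.one_le_abs (sub_ne_zero.2 hk)
      calc (1:ℝ) = ((1:ℤ):ℝ) := by norm_num
        _ ≤ ((|k - k₀| : ℤ) : ℝ) := by exact_mod_cast this
        _ = |((k:ℝ) - k₀)| := by push_cast [Int.cast_abs]; ring_nf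
    have h3 : |2 * π * ((k:ℝ) - k₀)| = |(x - 2*π*k₀) - (x - 2*π*k)| := by
      rw [show (x - 2*π*k₀) - (x - 2*π*k) = 2 * π * ((k:ℝ) - k₀) by push_cast; ring]
    have h4 : |(x - 2*π*k₀) - (x - 2*π*k)| ≤ π + ε := by
      calc |(x - 2*π*k₀) - (x - 2*π*k)| ≤ |x - 2*π*k₀| + |x - 2*π*k| := abs_sub _ _
        _ ≤ π + ε := by exact add_le_add hk₀ habs
    have h5 : 2 * π ≤ |2 * π * ((k:ℝ) - k₀)| := by
      rw [abs_mul, abs_of_pos (by linarith : (0:ℝ) < 2*π)]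
      nlinarith
    linarith [h3 ▸ h5]
  rw [hderiv, hts]
end

section
/- Let 0 < ε₁, ε₂ < π/2 and χ_{ε₁}, χ_{ε₂} be smooth even probability densities supported in [-ε₁,ε₁], [-ε₂,ε₂] respectively. Define α^{εᵢ}(x) = ∫ (x-y mod 2π)·χ_{εᵢ}(y) dy, and for ω ∈ ℝ let α_ω(x) := α(x - ω). Then for ω₁, ω₂ ∈ ℝ with ε₁ + ε₂ < ((ω₁ - ω₂) mod 2π) < 2π - ε₁ - ε₂, the Schwinger term satisfies S(α^{ε₁}_{ω₁}, α^{ε₂}_{ω₂}) := (1/(2π)) ∫₀^{2π} α^{ε₁}_{ω₁}(x)·(α^{ε₂}_{ω₂})'(x) dx = ((ω₁ - ω₂) mod 2π) - π. -/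
open Real MeasureTheory

lemma saw_eq_fract (z : ℝ) : saw z = 2 * π * Int.fract (z / (2 * π)) := by
  have h := Real.two_pi_pos
  rw [saw, Int.fract]
  field_simp

lemma saw_nonneg (z : ℝ) : 0 ≤ saw z := by
  rw [saw_eq_fract]
  have := Int.fract_nonneg (z / (2 * π))
  nlinarith [Real.two_pi_pos]

lemma saw_lt (z : ℝ) : saw z < 2 * π := by
  rw [saw_eq_fract]
  have := Int.fract_lt_one (z / (2 * π))
  nlinarith [Real.two_pi_pos]

lemma saw_add (z : ℝ) : saw (z + 2 * π) = saw z := by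
  have h := Real.two_pi_pos
  rw [saw, saw, show (z + 2 * π) / (2 * π) = z / (2 * π) + 1 by field_simp]
  rw [show z / (2 * π) + 1 = z / (2 * π) + (1:ℤ) by push_cast; ring, Int.floor_add_intCast]
  push_cast
  ring

lemma saw_shift {c : ℝ} (d : ℝ) (h1 : 0 ≤ saw c + d) (h2 : saw c + d < 2 * π) :
    saw (c + d) = saw c + d := by
  have h := Real.two_pi_pos
  have hfl : ⌊(c + d) / (2 * π)⌋ = ⌊c / (2 * π)⌋ := by
    rw [Int.floor_eq_iff]
    have hc : saw c = c - 2 * π * ⌊c / (2 * π)⌋ := rfl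
    constructor
    · rw [le_div_iff₀ h]
      nlinarith
    · rw [div_lt_iff₀ h]
      nlinarith
  rw [saw, hfl, saw]
  ring

lemma saw_neg {z : ℝ} (h : saw z ≠ 0) : saw (-z) = 2 * π - saw z := by
  have h2 := Real.two_pi_pos
  have hf : Int.fract (z / (2 * π)) ≠ 0 := by
    intro hc
    apply h
    rw [saw_eq_fract, hc, mul_zero]
  rw [saw_eq_fract, show -z / (2 * π) = -(z / (2 * π)) by ring, Int.fract_neg hf,
    saw_eq_fract]
  ring

section aux

variable {ε : ℝ} {χ : ℝ → ℝ}

lemma chi_zero_of (hsupp : Function.support χ ⊆ Set.Icc (-ε) ε) {t : ℝ} (ht : ε < |t|) :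
    χ t = 0 := by
  by_contra h
  have hm := hsupp (Function.mem_support.2 h)
  rw [Set.mem_Icc] at hm
  have := abs_le.mpr hm
  linarith

lemma chi_integrable (hχc : Continuous χ) (hsupp : Function.support χ ⊆ Set.Icc (-ε) ε) :
    Integrable χ := by
  refine hχc.integrable_of_hasCompactSupport (HasCompactSupport.intro (isCompact_Icc (a := -ε) (b := ε)) ?_)
  intro x hx
  by_contra h
  exact hx (hsupp (Function.mem_support.2 h))

lemma id_mul_chi_integrable (hχc : Continuous χ)
    (hsupp : Function.support χ ⊆ Set.Icc (-ε) ε) :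
    Integrable (fun y => y * χ y) := by
  refine (continuous_id.mul hχc).integrable_of_hasCompactSupport
    (HasCompactSupport.intro (isCompact_Icc (a := -ε) (b := ε)) ?_)
  intro x hx
  by_contra h
  apply hx
  apply hsupp
  refine Function.mem_support.2 fun h0 => ?_
  simp [h0] at h

lemma integral_id_mul_chi (hχc : Continuous χ)
    (hsupp : Function.support χ ⊆ Set.Icc (-ε) ε) (heven : ∀ x, χ (-x) = χ x) :
    ∫ y, y * χ y = 0 := by
  have h := MeasureTheory.integral_neg_eq_self (fun y => y * χ y) volume
  have h2 : (∫ (x:ℝ), -x * χ (-x)) = ∫ (x:ℝ), -(x * χ x) := by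
    congr 1
    funext x
    rw [heven]
    ring
  rw [h2, integral_neg] at h
  linarith

lemma Phi_hasDeriv (hχc : Continuous χ) (hint' : Integrable χ) (t : ℝ) :
    HasDerivAt (fun s => ∫ y in Set.Iic s, χ y) (χ t) t := by
  have hfun : (fun s => ∫ y in Set.Iic s, χ y)
      = fun s => (∫ y in (0:ℝ)..s, χ y) + ∫ y in Set.Iic (0:ℝ), χ y := by
    funext s
    rw [← intervalIntegral.integral_Iic_sub_Iic hint'.integrableOn hint'.integrableOn]
    ring
  rw [hfun]
  exact (intervalIntegral.integral_hasDerivAt_right hint'.intervalIntegrable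
    (hχc.stronglyMeasurableAtFilter _ _) hχc.continuousAt).add_const _

/-- Explicit local formula for the smeared sawtooth. -/
lemma alpha_formula (hε : 0 < ε) (hχc : Continuous χ)
    (hsupp : Function.support χ ⊆ Set.Icc (-ε) ε) (heven : ∀ x, χ (-x) = χ x)
    (hint : ∫ x, χ x = 1) {α : ℝ → ℝ} (hα : ∀ x, α x = ∫ y, saw (x - y) * χ y)
    (n : ℤ) {u : ℝ} (hu : |u - 2 * π * n| < 2 * π - ε) :
    α u = u - 2 * π * (n - 1) - 2 * π * ∫ y in Set.Iic (u - 2 * π * n), χ y := by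
  have h2π := Real.two_pi_pos
  have hub := abs_lt.mp hu
  have hint' := chi_integrable hχc hsupp
  have hpt : ∀ y, saw (u - y) * χ y
      = (u - 2 * π * ((n:ℝ) - 1)) * χ y - y * χ y
        - 2 * π * Set.indicator (Set.Iic (u - 2 * π * n)) χ y := by
    intro y
    by_cases hy : χ y = 0
    · simp [hy, Set.indicator_apply]
    · have hymem := hsupp (Function.mem_support.2 hy)
      rw [Set.mem_Icc] at hymem
      obtain ⟨hy1, hy2⟩ := hymem
      by_cases hcase : y ≤ u - 2 * π * n
      · have hfloor : ⌊(u - y) / (2 * π)⌋ = n := by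
          rw [Int.floor_eq_iff]
          constructor
          · rw [le_div_iff₀ h2π]
            linarith
          · rw [div_lt_iff₀ h2π]
            push_cast
            linarith
        rw [show saw (u - y) = u - y - 2 * π * ⌊(u - y) / (2 * π)⌋ from rfl, hfloor,
          Set.indicator_of_mem (show y ∈ Set.Iic (u - 2 * π * (n:ℝ)) from hcase) χ]
        push_cast
        ring
      · push_neg at hcase
        have hfloor : ⌊(u - y) / (2 * π)⌋ = n - 1 := by
          rw [Int.floor_eq_iff]
          constructor
          · rw [le_div_iff₀ h2π]
            push_cast
            linarith
          · rw [div_lt_iff₀ h2π]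
            push_cast
            linarith
        rw [show saw (u - y) = u - y - 2 * π * ⌊(u - y) / (2 * π)⌋ from rfl, hfloor,
          Set.indicator_of_notMem (show y ∉ Set.Iic (u - 2 * π * (n:ℝ)) by simpa using hcase) χ]
        push_cast
        ring
  rw [hα u, show (fun y => saw (u - y) * χ y)
      = fun y => (u - 2 * π * ((n:ℝ) - 1)) * χ y - y * χ y
        - 2 * π * Set.indicator (Set.Iic (u - 2 * π * n)) χ y from funext hpt]
  have hi1 : Integrable (fun y => (u - 2 * π * ((n:ℝ) - 1)) * χ y) := hint'.const_mul _
  have hi2 := id_mul_chi_integrable hχc hsupp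
  have hi3 : Integrable (fun y => 2 * π * Set.indicator (Set.Iic (u - 2 * π * n)) χ y) :=
    (hint'.indicator measurableSet_Iic).const_mul _
  have hi12 : Integrable (fun y => (u - 2 * π * ((n:ℝ) - 1)) * χ y - y * χ y) := hi1.sub hi2
  rw [integral_sub hi12 hi3, integral_sub hi1 hi2,
    integral_const_mul, integral_const_mul, integral_indicator measurableSet_Iic,
    hint, integral_id_mul_chi hχc hsupp heven]
  push_cast
  ring

/-- Derivative of the smeared sawtooth. -/
lemma alpha_hasDeriv (hε : 0 < ε) (hχc : Continuous χ)
    (hsupp : Function.support χ ⊆ Set.Icc (-ε) ε) (heven : ∀ x, χ (-x) = χ x)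
    (hint : ∫ x, χ x = 1) {α : ℝ → ℝ} (hα : ∀ x, α x = ∫ y, saw (x - y) * χ y)
    (n : ℤ) {x : ℝ} (hx : |x - 2 * π * n| < 2 * π - ε) :
    HasDerivAt α (1 - 2 * π * χ (x - 2 * π * n)) x := by
  have hint' := chi_integrable hχc hsupp
  have hG : HasDerivAt (fun u => u - 2 * π * ((n:ℝ) - 1)
      - 2 * π * ∫ y in Set.Iic (u - 2 * π * n), χ y) (1 - 2 * π * χ (x - 2 * π * n)) x := by
    have h1 : HasDerivAt (fun u : ℝ => u - 2 * π * ((n:ℝ) - 1)) 1 x :=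
      (hasDerivAt_id x).sub_const _
    have h2 : HasDerivAt (fun u => ∫ y in Set.Iic (u - 2 * π * n), χ y)
        (χ (x - 2 * π * n)) x := by
      have := (Phi_hasDeriv hχc hint' (x - 2 * π * n)).comp x
        ((hasDerivAt_id x).sub_const (2 * π * n))
      simpa [Function.comp_def] using this
    exact h1.sub ((h2.const_mul (2 * π)))
  have hopen : IsOpen {u : ℝ | |u - 2 * π * n| < 2 * π - ε} := by
    have : Continuous fun u : ℝ => |u - 2 * π * n| :=
      (continuous_id.sub continuous_const).abs
    exact isOpen_lt this continuous_const
  refine hG.congr_of_eventuallyEq ?_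
  filter_upwards [hopen.mem_nhds hx] with u hu
  exact alpha_formula hε hχc hsupp heven hint hα n hu

lemma round_bound (u : ℝ) : |u - 2 * π * (round (u / (2 * π)) : ℤ)| ≤ π := by
  have h2π := Real.two_pi_pos
  have h := abs_sub_round (u / (2 * π))
  have : u - 2 * π * (round (u / (2 * π)) : ℤ)
      = 2 * π * (u / (2 * π) - (round (u / (2 * π)) : ℤ)) := by
    field_simp
  rw [this, abs_mul, abs_of_pos h2π]
  nlinarith

end aux

theorem schwinger_term_of_smeared_sawtooths
    (ε₁ ε₂ : ℝ) (hε₁ : 0 < ε₁) (hε₁' : ε₁ < π / 2) (hε₂ : 0 < ε₂) (hε₂' : ε₂ < π / 2)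
    (χ₁ χ₂ : ℝ → ℝ) (hχ₁ : ContDiff ℝ (⊤ : ℕ∞) χ₁) (hχ₂ : ContDiff ℝ (⊤ : ℕ∞) χ₂)
    (hsupp₁ : Function.support χ₁ ⊆ Set.Icc (-ε₁) ε₁)
    (hsupp₂ : Function.support χ₂ ⊆ Set.Icc (-ε₂) ε₂)
    (heven₁ : ∀ x, χ₁ (-x) = χ₁ x) (heven₂ : ∀ x, χ₂ (-x) = χ₂ x)
    (hint₁ : ∫ x, χ₁ x = 1) (hint₂ : ∫ x, χ₂ x = 1)
    (α₁ α₂ : ℝ → ℝ)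
    (hα₁ : ∀ x, α₁ x = ∫ y, saw (x - y) * χ₁ y)
    (hα₂ : ∀ x, α₂ x = ∫ y, saw (x - y) * χ₂ y)
    (ω₁ ω₂ : ℝ)
    (hω : ε₁ + ε₂ < saw (ω₁ - ω₂)) (hω' : saw (ω₁ - ω₂) < 2 * π - ε₁ - ε₂) :
    (1 / (2 * π)) * ∫ x in (0:ℝ)..(2 * π),
        α₁ (x - ω₁) * deriv (fun y => α₂ (y - ω₂)) x
      = saw (ω₁ - ω₂) - π := by
  have hπ := Real.pi_pos
  have h2π := Real.two_pi_pos
  have hc₁ := hχ₁.continuous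
  have hc₂ := hχ₂.continuous
  have hint₁' := chi_integrable hc₁ hsupp₁
  have hint₂' := chi_integrable hc₂ hsupp₂
  -- continuity of α₁
  have hα₁cont : Continuous α₁ := by
    rw [continuous_iff_continuousAt]
    intro x
    have hx : |x - 2 * π * (round (x / (2 * π)) : ℤ)| < 2 * π - ε₁ := by
      have := round_bound x
      linarith
    exact (alpha_hasDeriv hε₁ hc₁ hsupp₁ heven₁ hint₁ hα₁ _ hx).continuousAt
  -- the periodized χ₂
  set c2 : ℝ → ℝ := fun u => χ₂ (u - 2 * π * (round (u / (2 * π)) : ℤ)) with hc2def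
  -- derivative identity
  have hD : ∀ x : ℝ, deriv (fun y => α₂ (y - ω₂)) x = 1 - 2 * π * c2 (x - ω₂) := by
    intro x
    have hx : |x - ω₂ - 2 * π * (round ((x - ω₂) / (2 * π)) : ℤ)| < 2 * π - ε₂ := by
      have := round_bound (x - ω₂)
      linarith
    have h := alpha_hasDeriv hε₂ hc₂ hsupp₂ heven₂ hint₂ hα₂ _ hx
    have h2 : HasDerivAt (fun y => α₂ (y - ω₂))
        (1 - 2 * π * χ₂ (x - ω₂ - 2 * π * (round ((x - ω₂) / (2 * π)) : ℤ))) x := by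
      have := h.comp x ((hasDerivAt_id x).sub_const ω₂)
      simpa [Function.comp_def] using this
    rw [h2.deriv]
  -- periodicity of α₁
  have hα₁per : Function.Periodic α₁ (2 * π) := by
    intro x
    rw [hα₁, hα₁]
    congr 1
    funext y
    rw [show x + 2 * π - y = (x - y) + 2 * π by ring, saw_add]
  -- periodicity of c2
  have hc2per : Function.Periodic c2 (2 * π) := by
    intro u
    simp only [hc2def]
    rw [show (u + 2 * π) / (2 * π) = u / (2 * π) + (1:ℤ) by push_cast; field_simp,
      round_add_intCast]
    congr 1
    push_cast
    ring
  set F : ℝ → ℝ := fun x => α₁ (x - ω₁) * (1 - 2 * π * c2 (x - ω₂)) with hFdef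
  have hstep1 : (∫ x in (0:ℝ)..(2 * π), α₁ (x - ω₁) * deriv (fun y => α₂ (y - ω₂)) x)
      = ∫ x in (0:ℝ)..(2 * π), F x := by
    refine intervalIntegral.integral_congr fun x _ => ?_
    rw [hD x]
  have hFper : Function.Periodic F (2 * π) := by
    intro x
    simp only [hFdef]
    rw [show x + 2 * π - ω₁ = (x - ω₁) + 2 * π by ring,
      show x + 2 * π - ω₂ = (x - ω₂) + 2 * π by ring, hα₁per, hc2per]
  have hstep2 : (∫ x in (0:ℝ)..(2 * π), F x) = ∫ x in (ω₂ - π)..(ω₂ + π), F x := by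
    have h := hFper.intervalIntegral_add_eq 0 (ω₂ - π)
    rw [show (0:ℝ) + 2 * π = 2 * π by ring, show ω₂ - π + 2 * π = ω₂ + π by ring] at h
    exact h
  -- on [ω₂ - π, ω₂ + π], c2 (x - ω₂) = χ₂ (x - ω₂)
  have hc2eq : ∀ u : ℝ, -π ≤ u → u ≤ π → c2 u = χ₂ u := by
    intro u hu1 hu2
    rcases lt_or_eq_of_le hu2 with hu2 | hu2
    · have h1 : -(1/2 : ℝ) ≤ u / (2 * π) := by
        rw [le_div_iff₀ h2π]; linarith
      have h2 : u / (2 * π) < 1/2 := by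
        rw [div_lt_iff₀ h2π]; linarith
      have hr : round (u / (2 * π)) = 0 := by
        rw [round_eq, Int.floor_eq_iff]
        constructor
        · push_cast; linarith
        · push_cast; linarith
      simp only [hc2def, hr]
      norm_num
    · subst hu2
      have hr : round (π / (2 * π)) = 1 := by
        rw [show π / (2 * π) = 1 / 2 by field_simp]
        norm_num [round_eq]
      have hz1 : χ₂ (-π) = 0 := chi_zero_of hsupp₂ (by rw [abs_neg, abs_of_pos hπ]; linarith)
      have hz2 : χ₂ π = 0 := chi_zero_of hsupp₂ (by rw [abs_of_pos hπ]; linarith)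
      simp only [hc2def, hr]
      rw [show π - 2 * π * ((1:ℤ):ℝ) = -π by push_cast; ring, hz1, hz2]
  have hstep3 : (∫ x in (ω₂ - π)..(ω₂ + π), F x)
      = ∫ x in (ω₂ - π)..(ω₂ + π),
          (α₁ (x - ω₁) - 2 * π * (α₁ (x - ω₁) * χ₂ (x - ω₂))) := by
    refine intervalIntegral.integral_congr fun x hx => ?_
    rw [Set.uIcc_of_le (by linarith), Set.mem_Icc] at hx
    simp only [hFdef]
    rw [hc2eq (x - ω₂) (by linarith [hx.1]) (by linarith [hx.2])]
    ring
  have hii1 : IntervalIntegrable (fun x => α₁ (x - ω₁)) volume (ω₂ - π) (ω₂ + π) :=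
    (hα₁cont.comp (continuous_id.sub continuous_const)).intervalIntegrable _ _
  have hii2 : IntervalIntegrable (fun x => α₁ (x - ω₁) * χ₂ (x - ω₂)) volume (ω₂ - π) (ω₂ + π) :=
    ((hα₁cont.comp (continuous_id.sub continuous_const)).mul
      (hc₂.comp (continuous_id.sub continuous_const))).intervalIntegrable _ _
  have hstep4 : (∫ x in (ω₂ - π)..(ω₂ + π),
        (α₁ (x - ω₁) - 2 * π * (α₁ (x - ω₁) * χ₂ (x - ω₂))))
      = (∫ x in (ω₂ - π)..(ω₂ + π), α₁ (x - ω₁))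
        - 2 * π * ∫ x in (ω₂ - π)..(ω₂ + π), α₁ (x - ω₁) * χ₂ (x - ω₂) := by
    rw [intervalIntegral.integral_sub hii1 (hii2.const_mul _),
      intervalIntegral.integral_const_mul]
  -- Piece 1
  have hpiece1 : (∫ x in (ω₂ - π)..(ω₂ + π), α₁ (x - ω₁)) = 2 * π ^ 2 := by
    rw [intervalIntegral.integral_comp_sub_right α₁ ω₁]
    have hsh := hα₁per.intervalIntegral_add_eq (ω₂ - π - ω₁) (-π)
    rw [show ω₂ - π - ω₁ + 2 * π = ω₂ + π - ω₁ by ring, show -π + 2 * π = π by ring] at hsh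
    rw [hsh]
    have hform : ∀ u ∈ Set.uIcc (-π) π, α₁ u
        = u + 2 * π - 2 * π * ∫ y in Set.Iic u, χ₁ y := by
      intro u hu
      rw [Set.uIcc_of_le (by linarith), Set.mem_Icc] at hu
      have := alpha_formula hε₁ hc₁ hsupp₁ heven₁ hint₁ hα₁ 0
        (u := u) (by rw [abs_lt]; push_cast; constructor <;> [linarith [hu.1]; linarith [hu.2]])
      rw [this]
      push_cast
      ring_nf
    rw [intervalIntegral.integral_congr hform]
    have hΦc : Continuous fun s => ∫ y in Set.Iic s, χ₁ y := by
      rw [continuous_iff_continuousAt]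
      exact fun t => (Phi_hasDeriv hc₁ hint₁' t).continuousAt
    have hiA : IntervalIntegrable (fun u : ℝ => u + 2 * π) volume (-π) π :=
      (continuous_id.add continuous_const).intervalIntegrable _ _
    have hiB : IntervalIntegrable (fun u : ℝ => 2 * π * ∫ y in Set.Iic u, χ₁ y)
        volume (-π) π := (continuous_const.mul hΦc).intervalIntegrable _ _
    have hsplit : (∫ u in (-π:ℝ)..π, (u + 2 * π - 2 * π * ∫ y in Set.Iic u, χ₁ y))
        = (∫ u in (-π:ℝ)..π, (u + 2 * π))
          - 2 * π * ∫ u in (-π:ℝ)..π, (∫ y in Set.Iic u, χ₁ y) := by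
      rw [intervalIntegral.integral_sub hiA hiB, intervalIntegral.integral_const_mul]
    rw [hsplit]
    have hiI : IntervalIntegrable (fun u : ℝ => u) volume (-π) π :=
      continuous_id.intervalIntegrable _ _
    have hiC : IntervalIntegrable (fun _ : ℝ => 2 * π) volume (-π) π :=
      continuous_const.intervalIntegrable _ _
    have h1 : (∫ u in (-π:ℝ)..π, (u + 2 * π)) = 4 * π ^ 2 := by
      rw [intervalIntegral.integral_add hiI hiC, integral_id,
        intervalIntegral.integral_const]
      simp
      ring
    have hrefl : ∀ t : ℝ, (∫ y in Set.Iic t, χ₁ y) + (∫ y in Set.Iic (-t), χ₁ y) = 1 := by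
      intro t
      have h1 : (∫ y in Set.Iic (-t), χ₁ y) = ∫ y in Set.Ioi t, χ₁ y := by
        have h := integral_comp_neg_Iic (-t) χ₁
        simp only [heven₁, neg_neg] at h
        exact h
      rw [h1, intervalIntegral.integral_Iic_add_Ioi hint₁'.integrableOn hint₁'.integrableOn,
        hint₁]
    have h2 : (∫ u in (-π:ℝ)..π, (∫ y in Set.Iic u, χ₁ y)) = π := by
      have hneg : (∫ u in (-π:ℝ)..π, (∫ y in Set.Iic (-u), χ₁ y))
          = ∫ u in (-π:ℝ)..π, (∫ y in Set.Iic u, χ₁ y) := by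
        rw [intervalIntegral.integral_comp_neg fun u => ∫ y in Set.Iic u, χ₁ y]
        norm_num
      have hsum : (∫ u in (-π:ℝ)..π,
          ((∫ y in Set.Iic u, χ₁ y) + ∫ y in Set.Iic (-u), χ₁ y)) = 2 * π := by
        rw [intervalIntegral.integral_congr (g := fun _ => (1:ℝ)) fun u _ => hrefl u]
        rw [intervalIntegral.integral_const]
        simp
        ring
      have hiD : IntervalIntegrable (fun u : ℝ => ∫ y in Set.Iic u, χ₁ y) volume (-π) π :=
        hΦc.intervalIntegrable _ _
      have hiE : IntervalIntegrable (fun u : ℝ => ∫ y in Set.Iic (-u), χ₁ y) volume (-π) π :=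
        (hΦc.comp continuous_neg).intervalIntegrable _ _
      rw [intervalIntegral.integral_add hiD hiE, hneg] at hsum
      linarith
    rw [h1, h2]
    ring
  -- Piece 2
  have hsawne : saw (ω₁ - ω₂) ≠ 0 := by
    have : (0:ℝ) < saw (ω₁ - ω₂) := by linarith
    exact this.ne'
  have hsawz : saw (ω₂ - ω₁) = 2 * π - saw (ω₁ - ω₂) := by
    rw [show ω₂ - ω₁ = -(ω₁ - ω₂) by ring, saw_neg hsawne]
  have hα₁val : ∀ u : ℝ, |u| ≤ ε₂ → α₁ (u + ω₂ - ω₁) = saw (ω₂ - ω₁) + u := by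
    intro u hu
    rw [hα₁]
    have huab := abs_le.mp hu
    have hpt : ∀ y, saw (u + ω₂ - ω₁ - y) * χ₁ y = (saw (ω₂ - ω₁) + u - y) * χ₁ y := by
      intro y
      by_cases hy : χ₁ y = 0
      · simp [hy]
      · have hym := hsupp₁ (Function.mem_support.2 hy)
        rw [Set.mem_Icc] at hym
        rw [show u + ω₂ - ω₁ - y = (ω₂ - ω₁) + (u - y) by ring,
          saw_shift (u - y) (by rw [hsawz]; linarith [hym.1, hym.2, huab.1, huab.2])
            (by rw [hsawz]; linarith [hym.1, hym.2, huab.1, huab.2])]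
        ring
    rw [show (fun y => saw (u + ω₂ - ω₁ - y) * χ₁ y)
        = fun y => (saw (ω₂ - ω₁) + u) * χ₁ y - y * χ₁ y from
      funext fun y => by rw [hpt y]; ring]
    rw [integral_sub (hint₁'.const_mul _) (id_mul_chi_integrable hc₁ hsupp₁),
      integral_const_mul, hint₁, integral_id_mul_chi hc₁ hsupp₁ heven₁]
    ring
  have hpiece2 : (∫ x in (ω₂ - π)..(ω₂ + π), α₁ (x - ω₁) * χ₂ (x - ω₂))
      = 2 * π - saw (ω₁ - ω₂) := by
    have hfun : ∀ x : ℝ, α₁ (x - ω₁) * χ₂ (x - ω₂)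
        = (fun u => α₁ (u + ω₂ - ω₁) * χ₂ u) (x - ω₂) := by
      intro x
      simp only
      rw [show x - ω₂ + ω₂ - ω₁ = x - ω₁ by ring]
    rw [intervalIntegral.integral_congr
        (g := fun x => (fun u => α₁ (u + ω₂ - ω₁) * χ₂ u) (x - ω₂)) fun x _ => hfun x,
      intervalIntegral.integral_comp_sub_right (fun u => α₁ (u + ω₂ - ω₁) * χ₂ u) ω₂,
      show ω₂ - π - ω₂ = -π by ring, show ω₂ + π - ω₂ = π by ring]
    have hcongr : ∀ u ∈ Set.uIcc (-π) π,
        α₁ (u + ω₂ - ω₁) * χ₂ u = (saw (ω₂ - ω₁) + u) * χ₂ u := by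
      intro u _
      by_cases hu : χ₂ u = 0
      · rw [hu, mul_zero, mul_zero]
      · have hum := hsupp₂ (Function.mem_support.2 hu)
        rw [Set.mem_Icc] at hum
        rw [hα₁val u (abs_le.mpr ⟨hum.1, hum.2⟩)]
    rw [intervalIntegral.integral_congr hcongr]
    have hsplit : (∫ u in (-π:ℝ)..π, (saw (ω₂ - ω₁) + u) * χ₂ u)
        = saw (ω₂ - ω₁) * (∫ u in (-π:ℝ)..π, χ₂ u) + ∫ u in (-π:ℝ)..π, u * χ₂ u := by
      have hiF : IntervalIntegrable (fun u : ℝ => saw (ω₂ - ω₁) * χ₂ u) volume (-π) π :=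
        (continuous_const.mul hc₂).intervalIntegrable _ _
      have hiG : IntervalIntegrable (fun u : ℝ => u * χ₂ u) volume (-π) π :=
        (continuous_id.mul hc₂).intervalIntegrable _ _
      rw [← intervalIntegral.integral_const_mul,
        ← intervalIntegral.integral_add hiF hiG]
      refine intervalIntegral.integral_congr fun u _ => ?_
      ring
    rw [hsplit]
    have hchi1 : (∫ u in (-π:ℝ)..π, χ₂ u) = 1 := by
      rw [intervalIntegral.integral_of_le (by linarith),
        MeasureTheory.setIntegral_eq_integral_of_forall_compl_eq_zero, hint₂]
      intro x hx
      rw [Set.mem_Ioc] at hx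
      push_neg at hx
      apply chi_zero_of hsupp₂
      rcases le_or_gt x (-π) with h | h
      · calc ε₂ < π := by linarith
          _ ≤ -x := by linarith
          _ ≤ |x| := neg_le_abs x
      · calc ε₂ < π := by linarith
          _ < x := hx h
          _ ≤ |x| := le_abs_self x
    have hodd : (∫ u in (-π:ℝ)..π, u * χ₂ u) = 0 := by
      have h := intervalIntegral.integral_comp_neg (a := -π) (b := π) (fun u => u * χ₂ u)
      rw [show (fun u : ℝ => -u * χ₂ (-u)) = fun u => -(u * χ₂ u) from
          funext fun u => by rw [heven₂]; ring] at h
      rw [intervalIntegral.integral_neg, neg_neg] at h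
      linarith [h]
    rw [hchi1, hodd, hsawz]
    ring
  rw [hstep1, hstep2, hstep3, hstep4, hpiece1, hpiece2]
  have : 2 * π ^ 2 - 2 * π * (2 * π - saw (ω₁ - ω₂)) = 2 * π * (saw (ω₁ - ω₂) - π) := by
    ring
  rw [this]
  field_simp
end

section
/- Suppose Φ₁, Φ₂ are operators with Φ̂₁ Φ̂₂ = e^{iθ} Φ̂₂ Φ̂₁ where θ = -2s(((ω₁-ω₂) mod 2π) - π) + π, and define Φⱼ := e^{isωⱼ(2Q-1)} Φ̂ⱼ where Q is a self-adjoint operator with integer spectrum satisfying Φ̂ⱼ Q = (Q-1) Φ̂ⱼ. Then Φ₁ Φ₂ = -e^{2πis(2n(ω₁-ω₂)+1)} Φ₂ Φ₁, where n(ω) := (ω - (ω mod 2π))/(2π). -/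
open Real

/-- The winding number `n(ω) = (ω - (ω mod 2π))/(2π)`. -/
noncomputable def winding (ω : ℝ) : ℤ := ⌊ω / (2 * π)⌋

lemma anyonic_aux {A : Type*} [Ring A] [Algebra ℂ A] (E : ℝ → A)
    (hE : ∀ a b : ℝ, E (a + b) = E a * E b) (Φ Ψ : A) (c₁ c₂ : ℝ)
    (hs : ∀ c : ℝ, Φ * E c = Complex.exp (-Complex.I * c) • (E c * Φ)) :
    (E c₁ * Φ) * (E c₂ * Ψ) = Complex.exp (-Complex.I * c₂) • (E (c₁ + c₂) * (Φ * Ψ)) := by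
  rw [hE, mul_assoc, ← mul_assoc Φ, hs, smul_mul_assoc, mul_smul_comm]
  congr 1
  noncomm_ring

/-- Dressing the auxiliary fields `Φ̂ⱼ` by `e^{isωⱼ(2Q-1)} = e^{-isωⱼ}·e^{i(2sωⱼ)Q}`
turns the distance-dependent exchange phase into the winding-number-dependent
Anyonic one.  Here `E c` represents `e^{icQ}`, so that `E (a+b) = E a * E b` and the
charge-shift relation `Φ̂ⱼ Q = (Q-1) Φ̂ⱼ` reads `Φ̂ⱼ E c = e^{-ic} E c Φ̂ⱼ`. -/
theorem anyonic_commutation_from_auxiliary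
    {A : Type*} [Ring A] [Algebra ℂ A]
    (s ω₁ ω₂ : ℝ) (Φhat₁ Φhat₂ : A) (E : ℝ → A)
    (hE : ∀ a b : ℝ, E (a + b) = E a * E b)
    (hshift₁ : ∀ c : ℝ, Φhat₁ * E c = Complex.exp (-Complex.I * c) • (E c * Φhat₁))
    (hshift₂ : ∀ c : ℝ, Φhat₂ * E c = Complex.exp (-Complex.I * c) • (E c * Φhat₂))
    (hcomm : Φhat₁ * Φhat₂ =
      Complex.exp (Complex.I * (-2 * s * (saw (ω₁ - ω₂) - π) + π)) • (Φhat₂ * Φhat₁))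
    (Φ₁ Φ₂ : A)
    (hΦ₁ : Φ₁ = Complex.exp (-Complex.I * s * ω₁) • (E (2 * s * ω₁) * Φhat₁))
    (hΦ₂ : Φ₂ = Complex.exp (-Complex.I * s * ω₂) • (E (2 * s * ω₂) * Φhat₂)) :
    Φ₁ * Φ₂ = (-Complex.exp (2 * π * Complex.I * s * (2 * winding (ω₁ - ω₂) + 1)))
      • (Φ₂ * Φ₁) :=  by
  have τdef := hcomm
  have h12 := anyonic_aux E hE Φhat₁ Φhat₂ (2*s*ω₁) (2*s*ω₂) hshift₁
  have h21 := anyonic_aux E hE Φhat₂ Φhat₁ (2*s*ω₂) (2*s*ω₁) hshift₂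
  subst hΦ₁ hΦ₂
  rw [smul_mul_smul_comm, h12, smul_mul_smul_comm, h21, hcomm,
    mul_smul_comm, smul_smul, smul_smul, smul_smul, smul_smul,
    show (2*s*ω₂ + 2*s*ω₁ : ℝ) = 2*s*ω₁ + 2*s*ω₂ by ring]
  congr 1
  rw [show -Complex.exp (2 * π * Complex.I * s * (2 * winding (ω₁ - ω₂) + 1))
      = Complex.exp (2 * π * Complex.I * s * (2 * winding (ω₁ - ω₂) + 1) + π * Complex.I) by
        rw [Complex.exp_add, Complex.exp_pi_mul_I]; ring]
  simp only [← Complex.exp_add]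
  congr 1
  simp only [saw, winding]
  push_cast
  ring
end
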